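/- Let U ⊆ 𝒨⁺_c be a family of measures on 𝒞 × 𝒞 that is uniformly bounded by c in total mass. Fix a positive integer m and ε ∈ (0, 1/m]. Then the maps α ↦ C̃(μ,α), defined on {α ∈ (ε,1]^m : ∑_{i=1}^m α_i = 1} and taking values in the compact subsets of ℝ^{m×m}, are Lipschitz continuous with constant 2c(m−1)/ε uniformly over all μ ∈ 𝒨⁺_c; more precisely, for every η ∈ (0, ε/m), all α, β in the domain with ‖α − β‖_∞ ≤ η, and every μ with total mass at most c, the Hausdorff distance (with respect to the entrywise ℓ∞ norm on ℝ^{m×m}) between C̃(μ,α) and C̃(μ,β) is at most 2c(m−1)η/ε. -/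

import Mathlib

open MeasureTheory Matrix
open scoped Pointwise

noncomputable section

/-- The Cantor set `{0,1}^ℕ`. -/
abbrev Cantor : Type := ℕ → Bool

/-- Cylinder set of a binary string given as a function `Fin n → Bool`. -/
def cylF {n : ℕ} (x : Fin n → Bool) : Set Cantor := {ω | ∀ i : Fin n, ω i = x i}

/-- Cylinder set of a binary string given as a list. -/
def cyl (x : List Bool) : Set Cantor := {ω | ∀ i : Fin x.length, ω i = x.get i}

/-- `ν` is the fair coin-flipping (uniform product) measure on the Cantor set:
the unique Borel probability measure giving every cylinder of depth `n` mass `2⁻ⁿ`. -/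
def IsCoinMeasure (ν : Measure Cantor) : Prop :=
  IsProbabilityMeasure ν ∧ ∀ (n : ℕ) (x : Fin n → Bool), ν (cylF x) = (1 / 2 : ENNReal) ^ n

/-- `K(k,n)`: nonnegative `k × I` matrices with all row sums `|I|/k` and all column sums `1`. -/
def Kset (k : ℕ) (I : Type) [Fintype I] : Set (Matrix (Fin k) I ℝ) :=
  {M | (∀ i j, 0 ≤ M i j) ∧ (∀ i, ∑ j, M i j = (Fintype.card I : ℝ) / k) ∧
       (∀ j, ∑ i, M i j = 1)}

/-- The `k`-shape `C(S,k) = {M S Mᵀ : M ∈ K(k,n)}` of a square matrix `S`. -/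
def matShape {I : Type} [Fintype I] (S : Matrix I I ℝ) (k : ℕ) :
    Set (Matrix (Fin k) (Fin k) ℝ) :=
  (fun M => M * S * Mᵀ) '' Kset k I

/-- `γ(S)`: the sum of all entries of `S`. -/
def gamma {I : Type} [Fintype I] (S : Matrix I I ℝ) : ℝ := ∑ i, ∑ j, S i j

/-- The entrywise ℓ¹ norm of a matrix. -/
def l1 {k : ℕ} (A : Matrix (Fin k) (Fin k) ℝ) : ℝ := ∑ i, ∑ j, |A i j|

/-- The Hausdorff distance (w.r.t. the entrywise ℓ¹ norm) between `A` and `B` is at most `ε`. -/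
def hdistLE {k : ℕ} (A B : Set (Matrix (Fin k) (Fin k) ℝ)) (ε : ℝ) : Prop :=
  (∀ X ∈ A, ∃ Y ∈ B, l1 (X - Y) ≤ ε) ∧ (∀ Y ∈ B, ∃ X ∈ A, l1 (X - Y) ≤ ε)

/-- Convergence of a sequence of shapes to `L` in the ℓ¹-Hausdorff metric. -/
def ShapeTendsto {k : ℕ} (C : ℕ → Set (Matrix (Fin k) (Fin k) ℝ))
    (L : Set (Matrix (Fin k) (Fin k) ℝ)) : Prop :=
  ∀ ε : ℝ, 0 < ε → ∃ N : ℕ, ∀ n ≥ N, hdistLE (C n) L ε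

/-- `C₀(μ,k)`: matrices `M` with `M i j = ∫ fᵢ(x) fⱼ(y) dμ` for a measurable partition of unity
`f₁,…,f_k` with `∫ fᵢ dν = 1/k`. -/
def mShape0 {α : Type} [MeasurableSpace α] (ν : Measure α) (μ : Measure (α × α)) (k : ℕ) :
    Set (Matrix (Fin k) (Fin k) ℝ) :=
  {M | ∃ f : Fin k → α → ℝ,
    (∀ i, Measurable (f i)) ∧ (∀ i x, 0 ≤ f i x) ∧ (∀ x, ∑ i, f i x = 1) ∧
    (∀ i, ∫ x, f i x ∂ν = 1 / k) ∧
    (∀ i j, M i j = ∫ p, f i p.1 * f j p.2 ∂μ)}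

/-- `C(μ,k)`: the topological closure of `C₀(μ,k)`. -/
def mShape {α : Type} [MeasurableSpace α] (ν : Measure α) (μ : Measure (α × α)) (k : ℕ) :
    Set (Matrix (Fin k) (Fin k) ℝ) := closure (mShape0 ν μ k)

/-- `C_c(μ,k)`: as `C₀(μ,k)` but with continuous witness functions. -/
def mShapeC (ν : Measure Cantor) (μ : Measure (Cantor × Cantor)) (k : ℕ) :
    Set (Matrix (Fin k) (Fin k) ℝ) :=
  {M | ∃ f : Fin k → Cantor → ℝ,
    (∀ i, Continuous (f i)) ∧ (∀ i x, 0 ≤ f i x) ∧ (∀ x, ∑ i, f i x = 1) ∧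
    (∀ i, ∫ x, f i x ∂ν = 1 / k) ∧
    (∀ i j, M i j = ∫ p, f i p.1 * f j p.2 ∂μ)}

open Classical in
/-- The real adjacency matrix of a simple graph. -/
def adjMat {V : Type} [Fintype V] (G : SimpleGraph V) : Matrix V V ℝ :=
  fun a b => if G.Adj a b then 1 else 0

/-- `C₀(G,k) = ‖A_G‖₁⁻¹ ⬝ C(A_G,k)` for a finite graph `G`. -/
def graphShape {V : Type} [Fintype V] (G : SimpleGraph V) (k : ℕ) :
    Set (Matrix (Fin k) (Fin k) ℝ) :=
  (gamma (adjMat G))⁻¹ • matShape (adjMat G) k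

/-- `K̂(k,m)`: characteristic matrices of balanced partitions of `{1,…,m}` into `k` classes. -/
def Khat (k m : ℕ) : Set (Matrix (Fin k) (Fin m) ℝ) :=
  {M | (∀ i j, M i j = 0 ∨ M i j = 1) ∧ (∀ j, ∑ i, M i j = 1) ∧
       (∀ i, ∑ j, M i j = (⌈(m : ℝ) / k⌉₊ : ℝ) ∨ ∑ j, M i j = (⌊(m : ℝ) / k⌋₊ : ℝ))}

/-- `C̃₀(μ,α)`: matrices coming from a measurable partition of unity with `∫ fᵢ dν = αᵢ`. -/
def tShape0 {α : Type} [MeasurableSpace α] (ν : Measure α) (μ : Measure (α × α)) {m : ℕ}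
    (a : Fin m → ℝ) : Set (Matrix (Fin m) (Fin m) ℝ) :=
  {M | ∃ f : Fin m → α → ℝ,
    (∀ i, Measurable (f i)) ∧ (∀ i x, 0 ≤ f i x) ∧ (∀ x, ∑ i, f i x = 1) ∧
    (∀ i, ∫ x, f i x ∂ν = a i) ∧
    (∀ i j, M i j = ∫ p, f i p.1 * f j p.2 ∂μ)}

/-- `C̃(μ,α)`: the topological closure of `C̃₀(μ,α)`. -/
def tShape {α : Type} [MeasurableSpace α] (ν : Measure α) (μ : Measure (α × α)) {m : ℕ}
    (a : Fin m → ℝ) : Set (Matrix (Fin m) (Fin m) ℝ) := closure (tShape0 ν μ a)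

/-- The Hausdorff distance w.r.t. the entrywise ℓ∞ norm between `A` and `B` is at most `ε`. -/
def hdistInfLE {m : ℕ} (A B : Set (Matrix (Fin m) (Fin m) ℝ)) (ε : ℝ) : Prop :=
  (∀ X ∈ A, ∃ Y ∈ B, ∀ i j, |X i j - Y i j| ≤ ε) ∧
  (∀ Y ∈ B, ∃ X ∈ A, ∀ i j, |X i j - Y i j| ≤ ε)

/-! Mixing a partition of unity `f` for `α` by a column-stochastic matrix `T` with `T α = β`
(`gᵢ = ∑ₖ Tᵢₖ fₖ`) yields one for `β` and replaces `M(μ,f)` by `T M(μ,f) Tᵀ`. If only the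
surplus `(αₖ - βₖ)⁺` of each column leaves the diagonal, `T` is entrywise `δ/ε`-close to the
identity whenever `|αᵢ - βᵢ| ≤ δ` and `αᵢ ≥ ε`, so every entry moves by at most
`2 (δ/ε) μ(𝒞 × 𝒞)`. Since `α` and `β` have the same sum, `δ = (m - 1) η` works. Congruence by
`T` is continuous, so the estimate passes to the closures. -/

section Transport

variable {n : Type*} [Fintype n]

lemma inv_sum_mul_mem_Icc {p : n → ℝ} (hp : ∀ i, 0 ≤ p i) (i : n) :
    (∑ j, p j)⁻¹ * p i ∈ Set.Icc 0 1 := by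
  have hpi : p i ≤ ∑ j, p j := Finset.single_le_sum (fun j _ => hp j) (Finset.mem_univ i)
  refine ⟨mul_nonneg (inv_nonneg.2 ((hp i).trans hpi)) (hp i), ?_⟩
  rcases ((hp i).trans hpi).eq_or_lt with hs | hs
  · simp [← hs]
  · exact inv_mul_le_one_of_le₀ hpi hs.le

lemma sum_posPart_sub_comm {a b : n → ℝ} (h : ∑ i, a i = ∑ i, b i) :
    ∑ i, (a i - b i)⁺ = ∑ i, (b i - a i)⁺ := by
  have hpn : ∀ i, (a i - b i)⁺ - (b i - a i)⁺ = a i - b i := fun i => by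
    rw [← neg_sub (b i), posPart_neg, negPart_sub_posPart]
  rw [← sub_eq_zero, ← Finset.sum_sub_distrib]
  simp only [hpn, Finset.sum_sub_distrib, h, sub_self]

variable [DecidableEq n]

/-- Each column `k` sends the fraction `(aₖ - bₖ)⁺ / aₖ` of its mass to the coordinates with a
deficit, in proportion to `(bᵢ - aᵢ)⁺`; the rest stays on the diagonal. -/
def transportMatrix (a b : n → ℝ) : Matrix n n ℝ :=
  of fun i k => (1 : Matrix n n ℝ) i k +
    ((∑ j, (b j - a j)⁺)⁻¹ * (b i - a i)⁺ - (1 : Matrix n n ℝ) i k) * ((a k - b k)⁺ / a k)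

variable {a b : n → ℝ}

lemma transportMatrix_mem_colStochastic (ha : ∀ i, 0 < a i) (hb : ∀ i, 0 ≤ b i)
    (h : ∑ i, a i = ∑ i, b i) : transportMatrix a b ∈ colStochastic ℝ n := by
  have hw := inv_sum_mul_mem_Icc fun i => posPart_nonneg (b i - a i)
  have ht : ∀ k, (a k - b k)⁺ / a k ∈ Set.Icc 0 1 := fun k =>
    ⟨div_nonneg (posPart_nonneg _) (ha k).le,
      (div_le_one (ha k)).2 (max_le (by linarith [hb k]) (ha k).le)⟩
  rw [mem_colStochastic_iff_sum]
  refine ⟨fun i k => ?_, fun k => ?_⟩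
  · rcases eq_or_ne i k with rfl | hik
    · simp only [transportMatrix, of_apply, one_apply_eq]
      nlinarith [mul_nonneg (hw i).1 (ht i).1, (ht i).2]
    · simp only [transportMatrix, of_apply, one_apply_ne hik, zero_add, sub_zero]
      exact mul_nonneg (hw i).1 (ht k).1
  · have hmass : (∑ i, (∑ j, (b j - a j)⁺)⁻¹ * (b i - a i)⁺) * ((a k - b k)⁺ / a k)
        = (a k - b k)⁺ / a k := by
      rcases eq_or_ne (∑ j, (b j - a j)⁺) 0 with hs | hs
      · have : (a k - b k)⁺ = 0 := by
          refine le_antisymm ?_ (posPart_nonneg _)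
          rw [← hs, ← sum_posPart_sub_comm h]
          exact Finset.single_le_sum (fun j _ => posPart_nonneg (a j - b j)) (Finset.mem_univ k)
        simp [this]
      · rw [← Finset.mul_sum, inv_mul_cancel₀ hs, one_mul]
    simp only [transportMatrix, of_apply, Finset.sum_add_distrib, ← Finset.sum_mul,
      Finset.sum_sub_distrib, one_apply, Fintype.sum_ite_eq']
    rw [sub_mul, hmass]
    ring

lemma transportMatrix_mulVec (ha : ∀ i, a i ≠ 0) (h : ∑ i, a i = ∑ i, b i) :
    transportMatrix a b *ᵥ a = b := by
  funext i
  have hmass : (∑ j, (b j - a j)⁺)⁻¹ * (b i - a i)⁺ * ∑ k, (a k - b k)⁺ = (b i - a i)⁺ := by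
    rw [sum_posPart_sub_comm h]
    rcases eq_or_ne (∑ j, (b j - a j)⁺) 0 with hs | hs
    · have : (b i - a i)⁺ = 0 := by
        refine le_antisymm ?_ (posPart_nonneg _)
        rw [← hs]
        exact Finset.single_le_sum (fun j _ => posPart_nonneg (b j - a j)) (Finset.mem_univ i)
      simp [this]
    · rw [mul_comm, ← mul_assoc, mul_inv_cancel₀ hs, one_mul]
  have hcol : ∀ k, transportMatrix a b i k * a k = (1 : Matrix n n ℝ) i k * (a k - (a k - b k)⁺)
      + (∑ j, (b j - a j)⁺)⁻¹ * (b i - a i)⁺ * (a k - b k)⁺ := fun k => by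
    simp only [transportMatrix, of_apply]
    field_simp [ha k]
    ring
  simp only [mulVec, dotProduct, hcol, Finset.sum_add_distrib, ← Finset.mul_sum, hmass, one_apply,
    ite_mul, one_mul, zero_mul, Finset.sum_ite_eq, Finset.mem_univ, if_true]
  have := negPart_sub_posPart (b i - a i)
  rw [← posPart_neg, neg_sub] at this
  linarith

lemma abs_transportMatrix_sub_one_le {ε δ : ℝ} (hε : 0 < ε) (ha : ∀ i, ε ≤ a i)
    (hab : ∀ i, |a i - b i| ≤ δ) (i k : n) :
    |transportMatrix a b i k - (1 : Matrix n n ℝ) i k| ≤ δ / ε := by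
  have hw := inv_sum_mul_mem_Icc (fun i => posPart_nonneg (b i - a i)) i
  have hdiff : |(∑ j, (b j - a j)⁺)⁻¹ * (b i - a i)⁺ - (1 : Matrix n n ℝ) i k| ≤ 1 := by
    rcases eq_or_ne i k with rfl | hik
    · rw [one_apply_eq, abs_sub_comm, abs_of_nonneg (by linarith [hw.2])]; linarith [hw.1]
    · rw [one_apply_ne hik, sub_zero, abs_of_nonneg hw.1]; exact hw.2
  have hak : 0 < a k := hε.trans_le (ha k)
  have ht : (a k - b k)⁺ / a k ≤ δ / ε :=
    div_le_div₀ ((abs_nonneg _).trans (hab k)) ((max_le (le_abs_self _) (abs_nonneg _)).trans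
      (hab k)) hε (ha k)
  simp only [transportMatrix, of_apply, add_sub_cancel_left, abs_mul,
    abs_of_nonneg (div_nonneg (posPart_nonneg (a k - b k)) hak.le)]
  calc _ ≤ 1 * ((a k - b k)⁺ / a k) :=
        mul_le_mul_of_nonneg_right hdiff (div_nonneg (posPart_nonneg _) hak.le)
    _ ≤ δ / ε := by rw [one_mul]; exact ht

end Transport

section Congruence

variable {n : Type*} [Fintype n]

lemma mul_mul_transpose_apply (T X : Matrix n n ℝ) (i j : n) :
    (T * X * Tᵀ) i j = ∑ k, ∑ l, T i k * T j l * X k l := by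
  simp only [mul_apply, transpose_apply, Finset.sum_mul]
  rw [Finset.sum_comm]
  exact Finset.sum_congr rfl fun _ _ => Finset.sum_congr rfl fun _ _ => by ring

lemma abs_mul_sub_mul_le_of_mem_Icc {x y x' y' : ℝ} (hx : x ∈ Set.Icc 0 1)
    (hy' : y' ∈ Set.Icc 0 1) :
    |x * y - x' * y'| ≤ |x - x'| + |y - y'| := by
  have : x * y - x' * y' = (x - x') * y' + x * (y - y') := by ring
  rw [this]
  refine (abs_add_le _ _).trans (add_le_add ?_ ?_) <;> rw [abs_mul]
  · exact mul_le_of_le_one_right (abs_nonneg _) ((abs_of_nonneg hy'.1).trans_le hy'.2)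
  · exact mul_le_of_le_one_left (abs_nonneg _) ((abs_of_nonneg hx.1).trans_le hx.2)

lemma abs_mul_mul_transpose_sub_le {T S X : Matrix n n ℝ} {r : ℝ}
    (hT : ∀ i k, T i k ∈ Set.Icc 0 1) (hS : ∀ i k, S i k ∈ Set.Icc 0 1)
    (hTS : ∀ i k, |T i k - S i k| ≤ r) (hX : ∀ k l, 0 ≤ X k l) (i j : n) :
    |(T * X * Tᵀ) i j - (S * X * Sᵀ) i j| ≤ 2 * r * ∑ k, ∑ l, X k l := by
  have hcoef : ∀ k l, |T i k * T j l - S i k * S j l| ≤ 2 * r := fun k l => by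
    linarith [abs_mul_sub_mul_le_of_mem_Icc (y := T j l) (x' := S i k) (hT i k) (hS j l),
      hTS i k, hTS j l]
  simp only [mul_mul_transpose_apply, ← Finset.sum_sub_distrib, ← sub_mul, Finset.mul_sum]
  refine (Finset.abs_sum_le_sum_abs _ _).trans (Finset.sum_le_sum fun k _ => ?_)
  refine (Finset.abs_sum_le_sum_abs _ _).trans (Finset.sum_le_sum fun l _ => ?_)
  rw [abs_mul, abs_of_nonneg (hX k l)]
  exact mul_le_mul_of_nonneg_right (hcoef k l) (hX k l)

end Congruence

section Shape

variable {α : Type} [MeasurableSpace α] {ν : Measure α} {μ : Measure (α × α)} {m : ℕ}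
  {a b : Fin m → ℝ}

lemma integral_sum_sum {β ι κ : Type*} [MeasurableSpace β] [Fintype ι] [Fintype κ]
    {μ : Measure β} {g : ι → κ → β → ℝ} (hg : ∀ k l, Integrable (g k l) μ) :
    ∫ p, ∑ k, ∑ l, g k l p ∂μ = ∑ k, ∑ l, ∫ p, g k l p ∂μ := by
  rw [integral_finsetSum _ fun k _ => integrable_finsetSum _ fun l _ => hg k l]
  exact Finset.sum_congr rfl fun k _ => integral_finsetSum _ fun l _ => hg k l

lemma integrable_mul_fst_snd_of_partition [IsFiniteMeasure μ] {f : Fin m → α → ℝ}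
    (hfm : ∀ i, Measurable (f i)) (hf0 : ∀ i x, 0 ≤ f i x) (hfs : ∀ x, ∑ i, f i x = 1)
    (k l : Fin m) : Integrable (fun p : α × α => f k p.1 * f l p.2) μ := by
  have hle : ∀ i x, f i x ≤ 1 := fun i x =>
    hfs x ▸ Finset.single_le_sum (fun j _ => hf0 j x) (Finset.mem_univ i)
  refine .of_bound (((hfm k).comp measurable_fst).mul ((hfm l).comp measurable_snd)
    |>.aestronglyMeasurable) 1 (ae_of_all _ fun p => ?_)
  rw [Real.norm_eq_abs, abs_of_nonneg (mul_nonneg (hf0 k p.1) (hf0 l p.2))]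
  exact mul_le_one₀ (hle k p.1) (hf0 l p.2) (hle l p.2)

lemma tShape0_subset_nonneg_sum_eq [IsFiniteMeasure μ] :
    tShape0 ν μ a ⊆ {X | (∀ i j, 0 ≤ X i j) ∧ ∑ i, ∑ j, X i j = μ.real Set.univ} := by
  rintro X ⟨f, hfm, hf0, hfs, -, hX⟩
  have hint := integrable_mul_fst_snd_of_partition (μ := μ) hfm hf0 hfs
  simp only [Set.mem_ofPred_eq, hX]
  refine ⟨fun i j => integral_nonneg fun p => mul_nonneg (hf0 i p.1) (hf0 j p.2), ?_⟩
  calc ∑ i, ∑ j, ∫ p, f i p.1 * f j p.2 ∂μ = ∫ p, ∑ i, ∑ j, f i p.1 * f j p.2 ∂μ :=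
        (integral_sum_sum hint).symm
    _ = ∫ _, (1 : ℝ) ∂μ := by
        congr 1 with p
        rw [← Finset.sum_mul_sum, hfs, hfs, one_mul]
    _ = μ.real Set.univ := by simp

lemma tShape_subset_nonneg_sum_eq [IsFiniteMeasure μ] :
    tShape ν μ a ⊆ {X | (∀ i j, 0 ≤ X i j) ∧ ∑ i, ∑ j, X i j = μ.real Set.univ} := by
  refine closure_minimal tShape0_subset_nonneg_sum_eq ?_
  rw [Set.ofPred_and]
  refine IsClosed.inter ?_ (isClosed_eq (by fun_prop) continuous_const)
  simp only [Set.ofPred_forall]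
  exact isClosed_iInter fun i => isClosed_iInter fun j =>
    isClosed_le continuous_const ((continuous_apply j).comp (continuous_apply i))

lemma mul_mul_transpose_mem_tShape0 [IsFiniteMeasure μ] {T X : Matrix (Fin m) (Fin m) ℝ}
    (hT : T ∈ colStochastic ℝ (Fin m)) (hTa : T *ᵥ a = b) (ha : ∀ i, a i ≠ 0)
    (hX : X ∈ tShape0 ν μ a) : T * X * Tᵀ ∈ tShape0 ν μ b := by
  obtain ⟨f, hfm, hf0, hfs, hfa, hX⟩ := hX
  have hfint : ∀ k, Integrable (f k) ν := fun k =>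
    .of_integral_ne_zero (by rw [hfa k]; exact ha k)
  have hint := integrable_mul_fst_snd_of_partition (μ := μ) hfm hf0 hfs
  refine ⟨fun i x => ∑ k, T i k * f k x, fun i => ?_, fun i x => ?_, fun x => ?_, fun i => ?_,
    fun i j => ?_⟩
  · exact Finset.measurable_sum _ fun k _ => (hfm k).const_mul _
  · exact Finset.sum_nonneg fun k _ => mul_nonneg (nonneg_of_mem_colStochastic hT) (hf0 k x)
  · rw [Finset.sum_comm]
    simp only [← Finset.sum_mul, sum_col_of_mem_colStochastic hT, one_mul, hfs]
  · rw [integral_finsetSum _ fun k _ => (hfint k).const_mul _]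
    simp only [integral_const_mul, hfa, ← hTa, mulVec, dotProduct]
  · calc (T * X * Tᵀ) i j = ∑ k, ∑ l, ∫ p, T i k * T j l * (f k p.1 * f l p.2) ∂μ := by
          simp only [mul_mul_transpose_apply, hX, integral_const_mul]
      _ = ∫ p, (∑ k, T i k * f k p.1) * ∑ l, T j l * f l p.2 ∂μ := by
          rw [← integral_sum_sum fun k l => (hint k l).const_mul _]
          congr 1 with p
          rw [Finset.sum_mul_sum]
          exact Finset.sum_congr rfl fun k _ => Finset.sum_congr rfl fun l _ => by ring

lemma mul_mul_transpose_mem_tShape [IsFiniteMeasure μ] {T X : Matrix (Fin m) (Fin m) ℝ}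
    (hT : T ∈ colStochastic ℝ (Fin m)) (hTa : T *ᵥ a = b) (ha : ∀ i, a i ≠ 0)
    (hX : X ∈ tShape ν μ a) : T * X * Tᵀ ∈ tShape ν μ b :=
  map_mem_closure (f := fun X => T * X * Tᵀ)
    ((continuous_const.matrix_mul continuous_id).matrix_mul continuous_const) hX
    fun _ => mul_mul_transpose_mem_tShape0 hT hTa ha

lemma exists_mem_tShape_abs_sub_le [IsFiniteMeasure μ] {ε δ : ℝ} (hε : 0 < ε) (ha : ∀ i, ε ≤ a i)
    (hb : ∀ i, 0 ≤ b i) (hsum : ∑ i, a i = ∑ i, b i) (hab : ∀ i, |a i - b i| ≤ δ)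
    {X : Matrix (Fin m) (Fin m) ℝ} (hX : X ∈ tShape ν μ a) :
    ∃ Y ∈ tShape ν μ b, ∀ i j, |X i j - Y i j| ≤ 2 * (δ / ε) * μ.real Set.univ := by
  have ha0 : ∀ i, 0 < a i := fun i => hε.trans_le (ha i)
  have hT := transportMatrix_mem_colStochastic ha0 hb hsum
  have hunit : ∀ i k, (1 : Matrix (Fin m) (Fin m) ℝ) i k ∈ Set.Icc 0 1 := fun i k => by
    rcases eq_or_ne i k with rfl | hik <;> simp [one_apply, *]
  obtain ⟨hX0, hXsum⟩ := tShape_subset_nonneg_sum_eq hX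
  refine ⟨_, mul_mul_transpose_mem_tShape hT (transportMatrix_mulVec (fun i => (ha0 i).ne') hsum)
    (fun i => (ha0 i).ne') hX, fun i j => ?_⟩
  have := abs_mul_mul_transpose_sub_le
    (fun i k => ⟨nonneg_of_mem_colStochastic hT, le_one_of_mem_colStochastic hT⟩) hunit
    (abs_transportMatrix_sub_one_le hε ha hab) hX0 i j
  rwa [Matrix.one_mul, transpose_one, Matrix.mul_one, abs_sub_comm, hXsum] at this

end Shape

lemma abs_sub_le_card_sub_one_mul_of_sum_eq {n : Type*} [Fintype n] {a b : n → ℝ} {η : ℝ}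
    (hsum : ∑ i, a i = ∑ i, b i) (hab : ∀ i, |a i - b i| ≤ η) (i : n) :
    |a i - b i| ≤ ((Fintype.card n : ℝ) - 1) * η := by
  classical
  have hsplit : a i - b i = ∑ j ∈ Finset.univ.erase i, (b j - a j) := by
    have h : ∑ j, (b j - a j) = 0 := by rw [Finset.sum_sub_distrib, hsum, sub_self]
    rw [← Finset.add_sum_erase _ _ (Finset.mem_univ i)] at h
    linarith
  have hcard : ((Finset.univ.erase i).card : ℝ) = (Fintype.card n : ℝ) - 1 := by
    rw [Finset.card_erase_of_mem (Finset.mem_univ i), Finset.card_univ,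
      Nat.cast_sub (Fintype.card_pos_iff.2 ⟨i⟩), Nat.cast_one]
  rw [hsplit, ← hcard, ← nsmul_eq_mul]
  refine (Finset.abs_sum_le_sum_abs _ _).trans (Finset.sum_le_card_nsmul _ _ _ fun j _ => ?_)
  rw [abs_sub_comm]
  exact hab j

theorem stmt_19_general (c : ℝ) (hc : 0 < c) (m : ℕ)
    (ε : ℝ) (hε : ε ∈ Set.Ioc (0 : ℝ) (1 / m))
    (ν : Measure Cantor)
    (η : ℝ)
    (a b : Fin m → ℝ)
    (ha : ∀ i, a i ∈ Set.Ioc ε 1) (ha1 : ∑ i, a i = 1)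
    (hb : ∀ i, b i ∈ Set.Ioc ε 1) (hb1 : ∑ i, b i = 1)
    (hab : ∀ i, |a i - b i| ≤ η)
    (μ : Measure (Cantor × Cantor))
    (hmass : μ Set.univ ≤ ENNReal.ofReal c) :
    hdistInfLE (tShape ν μ a) (tShape ν μ b) (2 * c * ((m : ℝ) - 1) * η / ε) := by
  have : IsFiniteMeasure μ := ⟨hmass.trans_lt ENNReal.ofReal_lt_top⟩
  have hsum : ∑ i, a i = ∑ i, b i := ha1.trans hb1.symm
  have hδ := abs_sub_le_card_sub_one_mul_of_sum_eq hsum hab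
  rw [Fintype.card_fin] at hδ
  have hbound : ∀ i : Fin m, 2 * (((m : ℝ) - 1) * η / ε) * μ.real Set.univ
      ≤ 2 * c * ((m : ℝ) - 1) * η / ε := fun i => by
    have : 0 ≤ ((m : ℝ) - 1) * η / ε := div_nonneg ((abs_nonneg _).trans (hδ i)) hε.1.le
    calc _ ≤ 2 * (((m : ℝ) - 1) * η / ε) * c := by
          gcongr
          exact ENNReal.toReal_le_of_le_ofReal hc.le hmass
      _ = _ := by ring
  refine ⟨fun X hX => ?_, fun Y hY => ?_⟩
  · obtain ⟨Y, hY, hXY⟩ := exists_mem_tShape_abs_sub_le hε.1 (fun i => (ha i).1.le)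
      (fun i => hε.1.le.trans (hb i).1.le) hsum hδ hX
    exact ⟨Y, hY, fun i j => (hXY i j).trans (hbound i)⟩
  · obtain ⟨X, hX, hXY⟩ := exists_mem_tShape_abs_sub_le hε.1 (fun i => (hb i).1.le)
      (fun i => hε.1.le.trans (ha i).1.le) hsum.symm
      (fun i => abs_sub_comm (a i) (b i) ▸ hδ i) hY
    exact ⟨X, hX, fun i j => abs_sub_comm (X i j) (Y i j) ▸ (hXY i j).trans (hbound i)⟩

/-- Uniform Lipschitz continuity of `α ↦ C̃(μ,α)` over all symmetric measures
of total mass at most `c`: if `α, β ∈ (ε,1]^m` sum to `1` and `‖α − β‖_∞ ≤ η < ε/m`, then the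
ℓ∞-Hausdorff distance between `C̃(μ,α)` and `C̃(μ,β)` is at most `2c(m−1)η/ε`. -/
theorem stmt_19 (c : ℝ) (hc : 0 < c) (m : ℕ) (hm : 0 < m)
    (ε : ℝ) (hε : ε ∈ Set.Ioc (0 : ℝ) (1 / m))
    (ν : Measure Cantor) (hν : IsCoinMeasure ν)
    (η : ℝ) (hη : η ∈ Set.Ioo (0 : ℝ) (ε / m))
    (a b : Fin m → ℝ)
    (ha : ∀ i, a i ∈ Set.Ioc ε 1) (ha1 : ∑ i, a i = 1)
    (hb : ∀ i, b i ∈ Set.Ioc ε 1) (hb1 : ∑ i, b i = 1)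
    (hab : ∀ i, |a i - b i| ≤ η)
    (μ : Measure (Cantor × Cantor)) (hsym : μ.map Prod.swap = μ)
    (hmass : μ Set.univ ≤ ENNReal.ofReal c) :
    hdistInfLE (tShape ν μ a) (tShape ν μ b) (2 * c * ((m : ℝ) - 1) * η / ε) :=
  stmt_19_general c hc m ε hε ν η a b ha ha1 hb hb1 hab μ hmass
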